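/- There does not exist a computable functional unit for ℕ with exactly one method operation that is universal. -/

import Mathlib

/-- Primitive instructions: plain basic `f.m`, positive test `+f.m`, negative test `-f.m`
(method names are natural numbers, there is a single focus `f`), forward jump `#l`,
backward jump `\l`, and the positive/negative termination instructions `!t` / `!f`. -/
inductive Instr : Type where
  | basic (m : ℕ)
  | postest (m : ℕ)
  | negtest (m : ℕ)
  | fjump (l : ℕ)
  | bjump (l : ℕ)
  | haltT
  | haltF
deriving DecidableEq

/-- A functional unit for a state space `S`: a finite, functional set of
(method name, method operation) pairs, where a method operation is a total
function `S → Bool × S`. -/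
structure FU (S : Type*) where
  carrier : Set (ℕ × (S → Bool × S))
  finite : carrier.Finite
  functional : ∀ {m : ℕ} {M M' : S → Bool × S},
    (m, M) ∈ carrier → (m, M') ∈ carrier → M = M'

/-- The interface of a functional unit: the set of method names occurring in it. -/
def FU.iface {S : Type*} (H : FU S) : Set ℕ := {m | ∃ M, (m, M) ∈ H.carrier}

/-- The method operation named `m` in `H` (an arbitrary fixed value if `m ∉ I(H)`). -/
noncomputable def FU.op {S : Type*} (H : FU S) (m : ℕ) (s : S) : Bool × S :=
  letI := Classical.propDecidable
  if h : ∃ M, (m, M) ∈ H.carrier then h.choose s else (true, s)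

/-- The restriction `⟨I, H⟩` of a functional unit to a set `I` of method names. -/
def FU.restrict {S : Type*} (H : FU S) (I : Set ℕ) : FU S where
  carrier := {p ∈ H.carrier | p.1 ∈ I}
  finite := H.finite.subset (Set.sep_subset _ _)
  functional := fun hM hM' => H.functional hM.1 hM'.1

/-- The method names used by an instruction all belong to `I`. -/
def Instr.namesIn (I : Set ℕ) : Instr → Prop
  | .basic m => m ∈ I
  | .postest m => m ∈ I
  | .negtest m => m ∈ I
  | _ => True

/-- An instruction sequence over a set `I` of method names: a finite nonempty list of
primitive instructions whose method names belong to `I`. -/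
def InstrSeqOver (I : Set ℕ) (x : List Instr) : Prop :=
  x ≠ [] ∧ ∀ u ∈ x, u.namesIn I

/-- `Exec H x i s b s'` : execution of the instruction sequence `x` on the functional
unit `H`, from (0-based) position `i` in state `s`, terminates delivering the Boolean
value `b` with final state `s'`.  (Position `i` here corresponds to the 1-based
position `i+1`; positions outside the sequence, jumps `#0`/`\0`, and infinite
executions admit no derivation, i.e. execution does not terminate.) -/
inductive Exec {S : Type*} (H : FU S) (x : List Instr) : ℕ → S → Bool → S → Prop where
  | basic {i : ℕ} {s : S} {b : Bool} {s' : S} (m : ℕ)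
      (hu : x[i]? = some (Instr.basic m))
      (h : Exec H x (i + 1) (H.op m s).2 b s') : Exec H x i s b s'
  | posT {i : ℕ} {s : S} {b : Bool} {s' : S} (m : ℕ)
      (hu : x[i]? = some (Instr.postest m)) (hr : (H.op m s).1 = true)
      (h : Exec H x (i + 1) (H.op m s).2 b s') : Exec H x i s b s'
  | posF {i : ℕ} {s : S} {b : Bool} {s' : S} (m : ℕ)
      (hu : x[i]? = some (Instr.postest m)) (hr : (H.op m s).1 = false)
      (h : Exec H x (i + 2) (H.op m s).2 b s') : Exec H x i s b s'
  | negT {i : ℕ} {s : S} {b : Bool} {s' : S} (m : ℕ)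
      (hu : x[i]? = some (Instr.negtest m)) (hr : (H.op m s).1 = true)
      (h : Exec H x (i + 2) (H.op m s).2 b s') : Exec H x i s b s'
  | negF {i : ℕ} {s : S} {b : Bool} {s' : S} (m : ℕ)
      (hu : x[i]? = some (Instr.negtest m)) (hr : (H.op m s).1 = false)
      (h : Exec H x (i + 1) (H.op m s).2 b s') : Exec H x i s b s'
  | fjump {i : ℕ} {s : S} {b : Bool} {s' : S} (l : ℕ)
      (hu : x[i]? = some (Instr.fjump l))
      (h : Exec H x (i + l) s b s') : Exec H x i s b s'
  | bjump {i : ℕ} {s : S} {b : Bool} {s' : S} (l : ℕ)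
      (hu : x[i]? = some (Instr.bjump l)) (hl : l ≤ i)
      (h : Exec H x (i - l) s b s') : Exec H x i s b s'
  | haltT {i : ℕ} {s : S} (hu : x[i]? = some Instr.haltT) : Exec H x i s true s
  | haltF {i : ℕ} {s : S} (hu : x[i]? = some Instr.haltF) : Exec H x i s false s

/-- `M` is a derived method operation of `H`: there is an instruction sequence `x`
over `I(H)` whose produced partial method operation `⌈x⌉_H` is total and equals `M`. -/
def DerivedOp {S : Type*} (H : FU S) (M : S → Bool × S) : Prop :=
  ∃ x : List Instr, InstrSeqOver H.iface x ∧ ∀ s, Exec H x 0 s (M s).1 (M s).2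

/-- `H ≤ H'` : every method operation of `H` is a derived method operation of `H'`. -/
def FU.le {S : Type*} (H H' : FU S) : Prop :=
  ∀ m M, (m, M) ∈ H.carrier → DerivedOp H' M

/-- `H ≡ H'` : `H ≤ H'` and `H' ≤ H`. -/
def FU.equiv {S : Type*} (H H' : FU S) : Prop := FU.le H H' ∧ FU.le H' H

/-- A method operation on ℕ is computable if both its components are. -/
def ComputableMO (M : ℕ → Bool × ℕ) : Prop :=
  Computable (fun n => (M n).1) ∧ Computable (fun n => (M n).2)

/-- A functional unit for ℕ is computable if all its method operations are. -/
def ComputableFU (H : FU ℕ) : Prop :=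
  ∀ m M, (m, M) ∈ H.carrier → ComputableMO M

/-
With a single method named `m₀`, every instruction of a sequence over the interface either
applies the state transformer `e` of that method or leaves the state alone, so every derived
method operation maps a state `s` into the forward orbit of `s` under `e`. A universal unit
would derive every constant operation, so every number would lie in the forward orbit of every
other. In particular `0` lies in the orbit of `e 0`, hence is periodic, and then all of `ℕ`
lies in the finite periodic orbit of `0`.
-/

theorem Function.not_forall_exists_iterate_eq {α : Type*} [Infinite α] (e : α → α) :
    ¬ ∀ s t : α, ∃ k, e^[k] s = t := by
  intro hreach
  obtain ⟨a⟩ := (inferInstance : Nonempty α)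
  obtain ⟨k, hk⟩ := hreach (e a) a
  have hper : Function.IsPeriodicPt e (k + 1) a := by
    rw [Function.IsPeriodicPt, Function.IsFixedPt, Function.iterate_succ_apply, hk]
  have hcover : Set.range (fun j : Fin (k + 1) => e^[j] a) = Set.univ := by
    refine Set.eq_univ_of_forall fun t => ?_
    obtain ⟨j, rfl⟩ := hreach a t
    exact ⟨⟨j % (k + 1), Nat.mod_lt _ k.succ_pos⟩, hper.iterate_mod_apply j⟩
  exact Set.infinite_univ (hcover ▸ Set.finite_range _)

namespace FU

variable {S : Type*}

def singleton (m : ℕ) (M : S → Bool × S) : FU S where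
  carrier := {(m, M)}
  finite := Set.finite_singleton _
  functional hM hM' := (Prod.mk.inj hM).2.trans (Prod.mk.inj hM').2.symm

theorem computableFU_singleton {m : ℕ} {M : ℕ → Bool × ℕ} (hM : ComputableMO M) :
    ComputableFU (singleton m M) := by
  rintro _ _ ⟨-, rfl⟩
  exact hM

theorem iface_eq_singleton {H : FU S} {p : ℕ × (S → Bool × S)} (hp : H.carrier = {p}) :
    H.iface = {p.1} := by
  ext m
  simp only [iface, hp, Set.mem_ofPred_eq, Set.mem_singleton_iff]
  exact ⟨fun ⟨_, hM⟩ => congrArg Prod.fst hM, fun hm => ⟨p.2, by rw [hm]⟩⟩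

end FU

theorem Exec.exists_iterate_eq {S : Type*} {H : FU S} {m₀ : ℕ} {x : List Instr}
    (hx : ∀ u ∈ x, u.namesIn {m₀}) {i : ℕ} {s : S} {b : Bool} {s' : S}
    (h : Exec H x i s b s') : ∃ k, (fun t => (H.op m₀ t).2)^[k] s = s' := by
  induction h with
  | fjump _ _ _ ih | bjump _ _ _ _ ih => exact ih
  | haltT | haltF => exact ⟨0, rfl⟩
  | basic m hu _ ih | posT m hu _ _ ih | posF m hu _ _ ih | negT m hu _ _ ih
  | negF m hu _ _ ih =>
    obtain rfl : m = m₀ := hx _ (List.mem_of_getElem? hu)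
    obtain ⟨k, hk⟩ := ih
    exact ⟨k + 1, hk⟩

theorem DerivedOp.exists_iterate_eq {S : Type*} {H : FU S} {m₀ : ℕ} (hH : H.iface = {m₀})
    {M : S → Bool × S} (hM : DerivedOp H M) (s : S) :
    ∃ k, (fun t => (H.op m₀ t).2)^[k] s = (M s).2 := by
  obtain ⟨x, ⟨-, hx⟩, hexec⟩ := hM
  exact (hexec s).exists_iterate_eq (hH ▸ hx)

/-- There is no universal computable functional unit for ℕ with exactly one method
operation. -/
theorem no_universal_computable_fu_one :
    ¬ ∃ H : FU ℕ, ComputableFU H ∧ H.carrier.ncard = 1 ∧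
        ∀ L : FU ℕ, ComputableFU L → FU.le L H := by
  rintro ⟨H, -, hone, huniv⟩
  obtain ⟨p, hp⟩ := Set.ncard_eq_one.mp hone
  refine Function.not_forall_exists_iterate_eq (fun t => (H.op p.1 t).2) fun s t => ?_
  have hconst : ComputableMO fun _ : ℕ => (true, t) := ⟨Computable.const _, Computable.const _⟩
  exact (huniv _ (FU.computableFU_singleton (m := 0) hconst) 0 _ rfl).exists_iterate_eq
    (FU.iface_eq_singleton hp) s
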